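/- Assume (D+) and let (V,u) be a weak solution of the Lifshitz–Slyozov system with total mass M, with V₀ > d(0) and ρ₀ > 0. Let x̄ > 0 be the unique solution of M = ρ₀ x̄ + d(x̄). Then lim_{t→∞} V(t) = d(x̄), and for every z ≥ 0, lim_{t→∞} X(t,z) = x̄. -/

import Mathlib

open Set Filter Topology MeasureTheory

/-- Assumption (D+): `d : [0,∞) → [0,∞)` is C¹ with `0 < α ≤ d'(x) ≤ β` for all `x ≥ 0`. -/
structure DPlus (d d' : ℝ → ℝ) (α β : ℝ) : Prop where
  nonneg : ∀ x ∈ Set.Ici (0:ℝ), 0 ≤ d x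
  hasDeriv : ∀ x ∈ Set.Ici (0:ℝ), HasDerivWithinAt d (d' x) (Set.Ici 0) x
  contDeriv : ContinuousOn d' (Set.Ici 0)
  alpha_pos : 0 < α
  deriv_lb : ∀ x ∈ Set.Ici (0:ℝ), α ≤ d' x
  deriv_ub : ∀ x ∈ Set.Ici (0:ℝ), d' x ≤ β

/-- A C¹ test function `φ` (with derivative `φ'`) on `[0,∞)` satisfying
`|φ(x)| ≤ C(1+x²)` and `|φ'(x)| ≤ C(1+x)` for some constant `C`. -/
def IsTest (φ φ' : ℝ → ℝ) : Prop :=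
  (∀ x ∈ Set.Ici (0:ℝ), HasDerivWithinAt φ (φ' x) (Set.Ici 0) x) ∧
  ContinuousOn φ' (Set.Ici 0) ∧
  ∃ C : ℝ, ∀ x ∈ Set.Ici (0:ℝ), |φ x| ≤ C * (1 + x ^ 2) ∧ |φ' x| ≤ C * (1 + x)

/-- Weak solution of the Lifshitz–Slyozov system with nucleation parameter `ε`
(`ε = 0`: no nucleation; `ε = 1`: nucleation with nucleus size `i0`) and total mass `M`:
`V` is C¹ on `[0,∞)`, `u(t,·) ≥ 0` with `(1+x²)u(t,x)` integrable, mass conservation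
`V(t) + ∫₀^∞ x u(t,x) dx = M` holds, and for every test function `φ`,
`d/dt ∫₀^∞ φ(x)u(t,x)dx = ∫₀^∞ φ'(x)(V(t)−d(x))u(t,x)dx + ε φ(0) V(t)^{i0}`. -/
structure WeakSolLSN (d : ℝ → ℝ) (M ε : ℝ) (i0 : ℕ) (V : ℝ → ℝ) (u : ℝ → ℝ → ℝ) : Prop where
  u_nonneg : ∀ t ∈ Set.Ici (0:ℝ), ∀ x ∈ Set.Ici (0:ℝ), 0 ≤ u t x
  V_contDiff : ContDiffOn ℝ 1 V (Set.Ici 0)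
  u_int : ∀ t ∈ Set.Ici (0:ℝ), IntegrableOn (fun x => (1 + x ^ 2) * u t x) (Set.Ioi 0)
  mass : ∀ t ∈ Set.Ici (0:ℝ), V t + ∫ x in Set.Ioi (0:ℝ), x * u t x = M
  weak : ∀ φ φ' : ℝ → ℝ, IsTest φ φ' → ∀ t ∈ Set.Ici (0:ℝ),
    HasDerivWithinAt (fun s => ∫ x in Set.Ioi (0:ℝ), φ x * u s x)
      ((∫ x in Set.Ioi (0:ℝ), φ' x * (V t - d x) * u t x) + ε * φ 0 * V t ^ i0)
      (Set.Ici 0) t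

/-!
The number of clusters `ρ = ∫ u` is conserved. The spread `W = ∫ (x - μ)² u` of the size
distribution around its mean `μ = ∫ x u / ρ` satisfies `W' = -2 ∫ (x - μ) (d x - d μ) u ≤ -2 α W`,
so `W → 0`, and by Cauchy–Schwarz and the Lipschitz bound on `d` the mean-field error
`∫ d u / ρ - d μ` is `O(√W)`. With `V = M - ρ μ` the mean then obeys
`μ' = -(ρ μ + d μ - M) + o(1)`, whose right-hand side is strictly decreasing in `μ` and vanishes
at `x̄`; hence `μ → x̄` and `V → M - ρ x̄ = d x̄`. A characteristic obeys `X' = d x̄ - d X + o(1)`,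
so `X → x̄` as well. Both limits come from Grönwall's inequality applied to `(y - a)²`.
-/

open Real

theorem tendsto_zero_of_hasDerivWithinAt_le_neg_mul_add {w w' g : ℝ → ℝ} {κ : ℝ} (hκ : 0 < κ)
    (hw : ∀ t ∈ Ici (0:ℝ), HasDerivWithinAt w (w' t) (Ici 0) t)
    (hw_nonneg : ∀ t ≥ 0, 0 ≤ w t) (hw' : ∀ t ≥ 0, w' t ≤ -κ * w t + g t)
    (hg : Tendsto g atTop (𝓝 0)) : Tendsto w atTop (𝓝 0) := by
  refine tendsto_order.2 ⟨fun a ha => ?_, fun ε hε => ?_⟩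
  · filter_upwards [eventually_ge_atTop 0] with t ht using ha.trans_le (hw_nonneg t ht)
  obtain ⟨T, hT0, hgT⟩ : ∃ T ≥ 0, ∀ t ≥ T, g t ≤ κ * ε / 2 := by
    obtain ⟨T, hT⟩ := eventually_atTop.1
      (hg.eventually (eventually_le_nhds (by positivity : (0:ℝ) < κ * ε / 2)))
    exact ⟨max T 0, le_max_right _ _, fun t ht => hT t (le_of_max_le_left ht)⟩
  have hbound : ∀ t ≥ T, w t ≤ gronwallBound (w T) (-κ) (κ * ε / 2) (t - T) := by
    intro t ht
    refine le_gronwallBound_of_liminf_deriv_right_le (f' := w') ?_ ?_ le_rfl ?_ t ⟨ht, le_rfl⟩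
    · exact fun s hs => (hw s (hT0.trans hs.1)).continuousWithinAt.mono
        fun r hr => hT0.trans hr.1
    · exact fun s hs r hr => ((hw s (hT0.trans hs.1)).mono
        (Ici_subset_Ici.2 (hT0.trans hs.1))).liminf_right_slope_le hr
    · intro s hs
      linarith [hw' s (hT0.trans hs.1), hgT s hs.1]
  have hexp : Tendsto (fun t => exp (-κ * (t - T))) atTop (𝓝 0) :=
    tendsto_exp_atBot.comp ((tendsto_id.atTop_add tendsto_const_nhds).const_mul_atTop_of_neg
      (neg_lt_zero.2 hκ))
  have hlim : Tendsto (fun t => gronwallBound (w T) (-κ) (κ * ε / 2) (t - T)) atTop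
      (𝓝 (ε / 2)) := by
    rw [gronwallBound_of_K_ne_0 (neg_ne_zero.2 hκ.ne')]
    convert (hexp.const_mul (w T)).add ((hexp.sub_const 1).const_mul (κ * ε / 2 / -κ)) using 2
    field_simp
    ring
  filter_upwards [eventually_ge_atTop T, hlim.eventually (eventually_lt_nhds (half_lt_self hε))]
    with t ht hlt using (hbound t ht).trans_lt hlt

theorem tendsto_of_hasDerivWithinAt_of_dissipative {y y' e : ℝ → ℝ} {a κ : ℝ} (hκ : 0 < κ)
    (hy : ∀ t ∈ Ici (0:ℝ), HasDerivWithinAt y (y' t) (Ici 0) t)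
    (hdiss : ∀ t ≥ 0, (y' t - e t) * (y t - a) ≤ -κ * (y t - a) ^ 2)
    (he : Tendsto e atTop (𝓝 0)) : Tendsto y atTop (𝓝 a) := by
  have hsq : Tendsto (fun t => (y t - a) ^ 2) atTop (𝓝 0) := by
    refine tendsto_zero_of_hasDerivWithinAt_le_neg_mul_add hκ
      (fun t ht => ((hy t ht).sub_const a).pow 2) (fun t _ => sq_nonneg _)
      (g := fun t => e t ^ 2 / κ) (fun t ht => ?_) (by simpa using (he.pow 2).div_const κ)
    have hamgm : 0 ≤ (κ * (y t - a) - e t) ^ 2 / κ := by positivity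
    have hexpand : (κ * (y t - a) - e t) ^ 2 / κ
        = κ * (y t - a) ^ 2 - 2 * e t * (y t - a) + e t ^ 2 / κ := by
      field_simp
      ring
    nlinarith [hdiss t ht]
  have habs : Tendsto (fun t => |y t - a|) atTop (𝓝 0) := by
    simpa [sqrt_sq_eq_abs] using hsq.sqrt
  exact tendsto_sub_nhds_zero_iff.1 ((tendsto_zero_iff_abs_tendsto_zero _).2 habs)

theorem sq_integral_mul_le_integral_mul_integral_sq_mul {X : Type*} [MeasurableSpace X]
    {ν : Measure X} {f w : X → ℝ} (hw : 0 ≤ᵐ[ν] w) (hw_int : Integrable w ν)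
    (hfw : Integrable (fun x => f x * w x) ν) (hf2w : Integrable (fun x => f x ^ 2 * w x) ν) :
    (∫ x, f x * w x ∂ν) ^ 2 ≤ (∫ x, w x ∂ν) * ∫ x, f x ^ 2 * w x ∂ν := by
  have hquad : ∀ s : ℝ, 0 ≤ (∫ x, f x ^ 2 * w x ∂ν) * (s * s)
      + (-2 * ∫ x, f x * w x ∂ν) * s + ∫ x, w x ∂ν := by
    intro s
    have hnonneg : 0 ≤ ∫ x, (s * f x - 1) ^ 2 * w x ∂ν :=
      integral_nonneg_of_ae (hw.mono fun x hx => mul_nonneg (sq_nonneg _) hx)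
    have hexpand : (fun x => (s * f x - 1) ^ 2 * w x)
        = fun x => s ^ 2 * (f x ^ 2 * w x) - 2 * s * (f x * w x) + w x := by
      ext x; ring
    have hint : Integrable (fun x => s ^ 2 * (f x ^ 2 * w x) - 2 * s * (f x * w x)) ν :=
      (hf2w.const_mul _).sub (hfw.const_mul _)
    rw [hexpand, integral_add hint hw_int,
      integral_sub (hf2w.const_mul _) (hfw.const_mul _), integral_const_mul,
      integral_const_mul] at hnonneg
    linarith
  have := discrim_le_zero hquad
  rw [discrim] at this
  nlinarith

namespace DPlus

variable {d d' : ℝ → ℝ} {α β : ℝ}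

theorem continuousOn (hD : DPlus d d' α β) : ContinuousOn d (Ici 0) :=
  fun x hx => (hD.hasDeriv x hx).continuousWithinAt

theorem beta_pos (hD : DPlus d d' α β) : 0 < β :=
  hD.alpha_pos.trans_le ((hD.deriv_lb 0 self_mem_Ici).trans (hD.deriv_ub 0 self_mem_Ici))

theorem mul_sub_le_sub (hD : DPlus d d' α β) {x y : ℝ} (hy : 0 ≤ y) (hyx : y ≤ x) :
    α * (x - y) ≤ d x - d y := by
  have hmono : MonotoneOn (fun s => d s - α * s) (Ici 0) := by
    refine monotoneOn_of_hasDerivWithinAt_nonneg (convex_Ici 0) (f' := fun s => d' s - α)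
      (hD.continuousOn.sub (continuousOn_const.mul continuousOn_id)) (fun s hs => ?_)
      (fun s hs => sub_nonneg.2 (hD.deriv_lb s (interior_subset hs)))
    rw [interior_Ici] at hs ⊢
    exact ((hD.hasDeriv s (mem_Ici.2 (le_of_lt hs))).mono Ioi_subset_Ici_self).sub
      (((hasDerivAt_id s).const_mul α).hasDerivWithinAt.congr_deriv (mul_one α))
  have := hmono (mem_Ici.2 hy) (mem_Ici.2 (hy.trans hyx)) hyx
  simp only at this
  linarith

theorem mul_sq_le_mul_sub (hD : DPlus d d' α β) {x y : ℝ} (hx : 0 ≤ x) (hy : 0 ≤ y) :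
    α * (x - y) ^ 2 ≤ (x - y) * (d x - d y) := by
  rcases le_total y x with hyx | hxy
  · nlinarith [hD.mul_sub_le_sub hy hyx]
  · nlinarith [hD.mul_sub_le_sub hx hxy]

theorem abs_sub_le (hD : DPlus d d' α β) {x y : ℝ} (hx : 0 ≤ x) (hy : 0 ≤ y) :
    |d x - d y| ≤ β * |x - y| :=
  Convex.norm_image_sub_le_of_norm_hasDerivWithin_le hD.hasDeriv
    (fun s hs => by
      rw [Real.norm_eq_abs, abs_of_pos (hD.alpha_pos.trans_le (hD.deriv_lb s hs))]
      exact hD.deriv_ub s hs)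
    (convex_Ici 0) hy hx

theorem abs_le (hD : DPlus d d' α β) {x : ℝ} (hx : 0 ≤ x) : |d x| ≤ d 0 + β * x := by
  have := hD.abs_sub_le hx le_rfl
  rw [sub_zero, abs_of_nonneg hx] at this
  rw [abs_of_nonneg (hD.nonneg x hx)]
  linarith [le_abs_self (d x - d 0)]

theorem tendsto_of_hasDerivWithinAt (hD : DPlus d d' α β) {V X : ℝ → ℝ} {a : ℝ} (ha : 0 ≤ a)
    (hV : Tendsto V atTop (𝓝 (d a)))
    (hX_nonneg : ∀ t ∈ Ici (0:ℝ), 0 ≤ X t)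
    (hX : ∀ t ∈ Ici (0:ℝ), HasDerivWithinAt X (V t - d (X t)) (Ici 0) t) :
    Tendsto X atTop (𝓝 a) := by
  refine tendsto_of_hasDerivWithinAt_of_dissipative hD.alpha_pos hX (fun t ht => ?_)
    (by simpa using hV.sub_const (d a))
  nlinarith [hD.mul_sq_le_mul_sub (hX_nonneg t ht) ha]

end DPlus

noncomputable def sizeMoment (k : ℕ) (u : ℝ → ℝ → ℝ) (t : ℝ) : ℝ := ∫ x in Ioi 0, x ^ k * u t x

noncomputable def meanSize (u : ℝ → ℝ → ℝ) (t : ℝ) : ℝ := sizeMoment 1 u t / sizeMoment 0 u t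

noncomputable def centralSizeMoment (u : ℝ → ℝ → ℝ) (t : ℝ) : ℝ :=
  ∫ x in Ioi 0, (x - meanSize u t) ^ 2 * u t x

theorem isTest_pow {k : ℕ} (hk : k ≤ 2) : IsTest (fun x => x ^ k) (fun x => k * x ^ (k - 1)) := by
  refine ⟨fun x _ => (hasDerivAt_pow k x).hasDerivWithinAt, by fun_prop, 2, fun x hx => ?_⟩
  have hx : (0:ℝ) ≤ x := hx
  interval_cases k <;>
    simp only [pow_zero, pow_one, abs_one, abs_pow, abs_mul, abs_of_nonneg hx, Nat.cast_zero,
      Nat.cast_one, Nat.cast_ofNat, Nat.abs_ofNat, zero_mul, abs_zero, one_mul, tsub_self,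
      Nat.add_one_sub_one] <;>
    exact ⟨by nlinarith [sq_nonneg (x - 1)], by nlinarith⟩

namespace WeakSolLSN

variable {d d' : ℝ → ℝ} {α β M ε : ℝ} {i0 : ℕ} {V : ℝ → ℝ} {u : ℝ → ℝ → ℝ} {t : ℝ}

theorem integrableOn_mul (hsol : WeakSolLSN d M ε i0 V u) (ht : 0 ≤ t) {f : ℝ → ℝ}
    (hf : ContinuousOn f (Ioi 0)) {C : ℝ} (hC : ∀ x > 0, |f x| ≤ C * (1 + x ^ 2)) :
    IntegrableOn (fun x => f x * u t x) (Ioi 0) := by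
  have hquot : ContinuousOn (fun x => f x / (1 + x ^ 2)) (Ioi 0) :=
    hf.div (by fun_prop) fun x _ => by positivity
  have hbdd : IntegrableOn (fun x => f x / (1 + x ^ 2) * ((1 + x ^ 2) * u t x)) (Ioi 0) := by
    refine (hsol.u_int t ht).bdd_mul (c := C) (hquot.aestronglyMeasurable measurableSet_Ioi)
      ((ae_restrict_mem measurableSet_Ioi).mono fun x hx => ?_)
    rw [Real.norm_eq_abs, abs_div, abs_of_pos (by positivity : (0:ℝ) < 1 + x ^ 2),
      div_le_iff₀ (by positivity)]
    exact hC x hx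
  refine hbdd.congr_fun (fun x _ => ?_) measurableSet_Ioi
  field_simp

theorem integrableOn_sizeMoment (hsol : WeakSolLSN d M ε i0 V u) (ht : 0 ≤ t) {k : ℕ}
    (hk : k ≤ 2) : IntegrableOn (fun x => x ^ k * u t x) (Ioi 0) :=
  hsol.integrableOn_mul ht (by fun_prop) (C := 1) fun x hx => by
    interval_cases k <;> simp only [pow_zero, pow_one, abs_one, abs_pow, abs_of_pos hx, one_mul] <;>
      nlinarith [sq_nonneg (x - 1)]

theorem integrableOn_d_mul (hD : DPlus d d' α β) (hsol : WeakSolLSN d M ε i0 V u) (ht : 0 ≤ t) :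
    IntegrableOn (fun x => d x * u t x) (Ioi 0) := by
  have hβ := hD.beta_pos
  refine hsol.integrableOn_mul ht (hD.continuousOn.mono Ioi_subset_Ici_self)
    (C := d 0 + β) fun x hx => ?_
  nlinarith [hD.abs_le hx.le, hD.nonneg 0 self_mem_Ici, sq_nonneg (x - 1), mul_nonneg
    (hD.nonneg 0 self_mem_Ici) (sq_nonneg x)]

theorem integrableOn_id_mul_d_mul (hD : DPlus d d' α β) (hsol : WeakSolLSN d M ε i0 V u)
    (ht : 0 ≤ t) : IntegrableOn (fun x => x * d x * u t x) (Ioi 0) := by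
  have hβ := hD.beta_pos
  refine hsol.integrableOn_mul ht
    (continuousOn_id.mul (hD.continuousOn.mono Ioi_subset_Ici_self))
    (C := d 0 + β) fun x hx => ?_
  rw [abs_mul, abs_of_pos hx]
  nlinarith [mul_le_mul_of_nonneg_left (hD.abs_le hx.le) hx.le, hD.nonneg 0 self_mem_Ici,
    sq_nonneg (x - 1), mul_nonneg (hD.nonneg 0 self_mem_Ici) (sq_nonneg (x - 1))]

theorem integrableOn_sub_sq_mul (hsol : WeakSolLSN d M ε i0 V u) (ht : 0 ≤ t) (c : ℝ) :
    IntegrableOn (fun x => (x - c) ^ 2 * u t x) (Ioi 0) :=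
  hsol.integrableOn_mul ht (by fun_prop) (C := 2 * (1 + c ^ 2)) fun x _ => by
    rw [abs_of_nonneg (sq_nonneg _)]
    nlinarith [sq_nonneg (x + c), sq_nonneg (c * x)]

theorem integrableOn_abs_sub_mul (hsol : WeakSolLSN d M ε i0 V u) (ht : 0 ≤ t) (c : ℝ) :
    IntegrableOn (fun x => |x - c| * u t x) (Ioi 0) :=
  hsol.integrableOn_mul ht (by fun_prop) (C := 1 + |c|) fun x hx => by
    rw [abs_abs]
    nlinarith [abs_sub x c, abs_of_pos hx, abs_nonneg c, sq_nonneg (x - 1),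
      mul_nonneg (abs_nonneg c) (sq_nonneg x)]

theorem integrableOn_sub_mul_sub_mul (hD : DPlus d d' α β) (hsol : WeakSolLSN d M ε i0 V u)
    (ht : 0 ≤ t) {c : ℝ} (hc : 0 ≤ c) :
    IntegrableOn (fun x => (x - c) * (d x - d c) * u t x) (Ioi 0) := by
  have hβ := hD.beta_pos
  refine hsol.integrableOn_mul ht
    ((continuousOn_id.sub continuousOn_const).mul
      ((hD.continuousOn.mono Ioi_subset_Ici_self).sub continuousOn_const))
    (C := 2 * β * (1 + c ^ 2)) fun x hx => ?_
  have hlip : |x - c| * |d x - d c| ≤ β * (x - c) ^ 2 := by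
    calc |x - c| * |d x - d c| ≤ |x - c| * (β * |x - c|) :=
          mul_le_mul_of_nonneg_left (hD.abs_sub_le hx.le hc) (abs_nonneg _)
      _ = β * (x - c) ^ 2 := by rw [← sq_abs (x - c)]; ring
  rw [abs_mul]
  nlinarith [sq_nonneg (x + c), sq_nonneg (c * x)]

theorem hasDerivWithinAt_sizeMoment (hsol : WeakSolLSN d M 0 i0 V u) {k : ℕ} (hk : k ≤ 2)
    (ht : 0 ≤ t) :
    HasDerivWithinAt (sizeMoment k u)
      (∫ x in Ioi 0, k * x ^ (k - 1) * (V t - d x) * u t x) (Ici 0) t := by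
  show HasDerivWithinAt (fun s => ∫ x in Ioi 0, x ^ k * u s x) _ _ _
  simpa only [zero_mul, add_zero] using hsol.weak _ _ (isTest_pow hk) t ht

theorem hasDerivWithinAt_sizeMoment_one (hD : DPlus d d' α β) (hsol : WeakSolLSN d M 0 i0 V u)
    (ht : 0 ≤ t) :
    HasDerivWithinAt (sizeMoment 1 u)
      (V t * sizeMoment 0 u t - ∫ x in Ioi 0, d x * u t x) (Ici 0) t := by
  convert hsol.hasDerivWithinAt_sizeMoment one_le_two ht using 1
  rw [sizeMoment, ← integral_const_mul, ← integral_sub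
    ((hsol.integrableOn_sizeMoment ht zero_le_two).const_mul _) (hsol.integrableOn_d_mul hD ht)]
  congr 1 with x
  ring

theorem hasDerivWithinAt_sizeMoment_two (hD : DPlus d d' α β) (hsol : WeakSolLSN d M 0 i0 V u)
    (ht : 0 ≤ t) :
    HasDerivWithinAt (sizeMoment 2 u)
      (2 * (V t * sizeMoment 1 u t - ∫ x in Ioi 0, x * d x * u t x)) (Ici 0) t := by
  convert hsol.hasDerivWithinAt_sizeMoment le_rfl ht using 1
  rw [sizeMoment, ← integral_const_mul, ← integral_sub
    ((hsol.integrableOn_sizeMoment ht one_le_two).const_mul _)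
    (hsol.integrableOn_id_mul_d_mul hD ht), ← integral_const_mul]
  congr 1 with x
  push_cast
  ring

theorem integral_sub_mul_sub_mul (hD : DPlus d d' α β) (hsol : WeakSolLSN d M ε i0 V u)
    (ht : 0 ≤ t) (c : ℝ) :
    ∫ x in Ioi 0, (x - c) * (d x - d c) * u t x
      = (∫ x in Ioi 0, x * d x * u t x) - c * (∫ x in Ioi 0, d x * u t x)
        - d c * sizeMoment 1 u t + c * d c * sizeMoment 0 u t := by
  have h1 := hsol.integrableOn_id_mul_d_mul hD ht
  have h12 : IntegrableOn (fun x => x * d x * u t x - c * (d x * u t x)) (Ioi 0) :=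
    h1.sub ((hsol.integrableOn_d_mul hD ht).const_mul c)
  have h123 : IntegrableOn
      (fun x => x * d x * u t x - c * (d x * u t x) - d c * (x ^ 1 * u t x)) (Ioi 0) :=
    h12.sub ((hsol.integrableOn_sizeMoment ht one_le_two).const_mul (d c))
  have h4 := (hsol.integrableOn_sizeMoment ht zero_le_two).const_mul (c * d c)
  rw [sizeMoment, sizeMoment, ← integral_const_mul, ← integral_const_mul, ← integral_const_mul,
    ← integral_sub h1 (hsol.integrableOn_d_mul hD ht |>.const_mul c), ← integral_sub h12
    ((hsol.integrableOn_sizeMoment ht one_le_two).const_mul (d c)), ← integral_add h123 h4]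
  congr 1 with x
  ring

theorem centralSizeMoment_eq (hsol : WeakSolLSN d M ε i0 V u) (ht : 0 ≤ t)
    (hρ : sizeMoment 0 u t ≠ 0) :
    centralSizeMoment u t = sizeMoment 2 u t - sizeMoment 1 u t ^ 2 / sizeMoment 0 u t := by
  have h2 := hsol.integrableOn_sizeMoment ht le_rfl
  have h1 := (hsol.integrableOn_sizeMoment ht one_le_two).const_mul (2 * meanSize u t)
  have h21 : IntegrableOn
      (fun x => x ^ 2 * u t x - 2 * meanSize u t * (x ^ 1 * u t x)) (Ioi 0) := h2.sub h1
  have h0 := (hsol.integrableOn_sizeMoment ht zero_le_two).const_mul (meanSize u t ^ 2)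
  have hexpand : centralSizeMoment u t
      = sizeMoment 2 u t - 2 * meanSize u t * sizeMoment 1 u t
        + meanSize u t ^ 2 * sizeMoment 0 u t := by
    rw [centralSizeMoment, sizeMoment, sizeMoment, sizeMoment, ← integral_const_mul,
      ← integral_const_mul, ← integral_sub h2 h1, ← integral_add h21 h0]
    congr 1 with x
    ring
  rw [hexpand, meanSize]
  field_simp
  ring

theorem hasDerivWithinAt_sizeMoment_zero (hsol : WeakSolLSN d M 0 i0 V u) (ht : 0 ≤ t) :
    HasDerivWithinAt (sizeMoment 0 u) 0 (Ici 0) t := by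
  simpa using hsol.hasDerivWithinAt_sizeMoment zero_le_two ht

theorem sizeMoment_zero_eq (hsol : WeakSolLSN d M 0 i0 V u) (ht : 0 ≤ t) :
    sizeMoment 0 u t = sizeMoment 0 u 0 := by
  refine constant_of_has_deriv_right_zero (fun s hs => ?_) (fun s hs => ?_) t ⟨ht, le_rfl⟩
  · exact (hsol.hasDerivWithinAt_sizeMoment_zero hs.1).continuousWithinAt.mono
      Icc_subset_Ici_self
  · exact (hsol.hasDerivWithinAt_sizeMoment_zero hs.1).mono (Ici_subset_Ici.2 hs.1)

theorem meanSize_nonneg (hsol : WeakSolLSN d M ε i0 V u) (ht : 0 ≤ t) : 0 ≤ meanSize u t := by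
  have hmoment : ∀ k, 0 ≤ sizeMoment k u t := fun k =>
    setIntegral_nonneg measurableSet_Ioi fun x (hx : 0 < x) =>
      mul_nonneg (pow_nonneg hx.le k) (hsol.u_nonneg t ht x hx.le)
  exact div_nonneg (hmoment 1) (hmoment 0)

theorem centralSizeMoment_nonneg (hsol : WeakSolLSN d M ε i0 V u) (ht : 0 ≤ t) :
    0 ≤ centralSizeMoment u t :=
  setIntegral_nonneg measurableSet_Ioi fun x (hx : 0 < x) =>
    mul_nonneg (sq_nonneg _) (hsol.u_nonneg t ht x hx.le)

theorem V_eq_sub_mul_meanSize (hsol : WeakSolLSN d M 0 i0 V u) (hρ : 0 < sizeMoment 0 u 0)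
    (ht : 0 ≤ t) : V t = M - sizeMoment 0 u 0 * meanSize u t := by
  have hmass := hsol.mass t ht
  rw [meanSize, ← hsol.sizeMoment_zero_eq ht, mul_div_cancel₀ _
    ((hsol.sizeMoment_zero_eq ht).symm ▸ hρ.ne'), ← hmass, sizeMoment]
  simp only [pow_one, add_sub_cancel_right]

theorem hasDerivWithinAt_meanSize (hD : DPlus d d' α β) (hsol : WeakSolLSN d M 0 i0 V u)
    (hρ : 0 < sizeMoment 0 u 0) (ht : 0 ≤ t) :
    HasDerivWithinAt (meanSize u)
      (V t - (∫ x in Ioi 0, d x * u t x) / sizeMoment 0 u 0) (Ici 0) t := by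
  have hρt : sizeMoment 0 u t ≠ 0 := (hsol.sizeMoment_zero_eq ht).symm ▸ hρ.ne'
  rw [← hsol.sizeMoment_zero_eq ht]
  refine ((hsol.hasDerivWithinAt_sizeMoment_one hD ht).div
    (hsol.hasDerivWithinAt_sizeMoment_zero ht) hρt).congr_deriv ?_
  field_simp
  ring

theorem hasDerivWithinAt_centralSizeMoment (hD : DPlus d d' α β)
    (hsol : WeakSolLSN d M 0 i0 V u) (hρ : 0 < sizeMoment 0 u 0) (ht : 0 ≤ t) :
    HasDerivWithinAt (centralSizeMoment u)
      (-2 * ∫ x in Ioi 0, (x - meanSize u t) * (d x - d (meanSize u t)) * u t x)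
      (Ici 0) t := by
  have hρt : ∀ s ≥ 0, sizeMoment 0 u s ≠ 0 := fun s hs =>
    (hsol.sizeMoment_zero_eq hs).symm ▸ hρ.ne'
  have hW := ((hsol.hasDerivWithinAt_sizeMoment_two hD ht).sub
    (((hsol.hasDerivWithinAt_sizeMoment_one hD ht).pow 2).div
      (hsol.hasDerivWithinAt_sizeMoment_zero ht) (hρt t ht))).congr_of_mem
    (fun s hs => hsol.centralSizeMoment_eq hs (hρt s hs)) ht
  have hm : sizeMoment 1 u t = meanSize u t * sizeMoment 0 u t :=
    (div_mul_cancel₀ _ (hρt t ht)).symm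
  refine hW.congr_deriv ?_
  rw [hsol.integral_sub_mul_sub_mul hD ht, hm]
  field_simp [hρt t ht]
  ring

theorem mul_centralSizeMoment_le (hD : DPlus d d' α β) (hsol : WeakSolLSN d M ε i0 V u)
    (ht : 0 ≤ t) :
    α * centralSizeMoment u t
      ≤ ∫ x in Ioi 0, (x - meanSize u t) * (d x - d (meanSize u t)) * u t x := by
  have hμ := hsol.meanSize_nonneg ht
  rw [centralSizeMoment, ← integral_const_mul]
  refine setIntegral_mono_on ((hsol.integrableOn_sub_sq_mul ht _).const_mul α)
    (hsol.integrableOn_sub_mul_sub_mul hD ht hμ) measurableSet_Ioi fun x (hx : 0 < x) => ?_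
  rw [← mul_assoc]
  exact mul_le_mul_of_nonneg_right (hD.mul_sq_le_mul_sub hx.le hμ) (hsol.u_nonneg t ht x hx.le)

theorem tendsto_centralSizeMoment (hD : DPlus d d' α β) (hsol : WeakSolLSN d M 0 i0 V u)
    (hρ : 0 < sizeMoment 0 u 0) : Tendsto (centralSizeMoment u) atTop (𝓝 0) :=
  tendsto_zero_of_hasDerivWithinAt_le_neg_mul_add (mul_pos two_pos hD.alpha_pos)
    (fun t ht => hsol.hasDerivWithinAt_centralSizeMoment hD hρ ht)
    (fun t ht => hsol.centralSizeMoment_nonneg ht)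
    (fun t ht => by linarith [hsol.mul_centralSizeMoment_le hD ht]) (g := fun _ => 0)
    tendsto_const_nhds

theorem sq_integral_d_mul_sub_le (hD : DPlus d d' α β) (hsol : WeakSolLSN d M ε i0 V u)
    (ht : 0 ≤ t) {c : ℝ} (hc : 0 ≤ c) :
    ((∫ x in Ioi 0, d x * u t x) - d c * sizeMoment 0 u t) ^ 2
      ≤ β ^ 2 * sizeMoment 0 u t * ∫ x in Ioi 0, (x - c) ^ 2 * u t x := by
  have hu : IntegrableOn (u t) (Ioi 0) := by
    simpa using hsol.integrableOn_sizeMoment ht zero_le_two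
  have hdiff : (∫ x in Ioi 0, d x * u t x) - d c * sizeMoment 0 u t
      = ∫ x in Ioi 0, (d x - d c) * u t x := by
    simp only [sub_mul, sizeMoment, pow_zero, one_mul]
    rw [integral_sub (hsol.integrableOn_d_mul hD ht) (hu.const_mul _), integral_const_mul]
  have hL1 : |∫ x in Ioi 0, (d x - d c) * u t x| ≤ β * ∫ x in Ioi 0, |x - c| * u t x := by
    rw [← integral_const_mul, ← Real.norm_eq_abs]
    refine norm_integral_le_of_norm_le ((hsol.integrableOn_abs_sub_mul ht c).const_mul β)
      ((ae_restrict_mem measurableSet_Ioi).mono fun x (hx : 0 < x) => ?_)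
    have hux := hsol.u_nonneg t ht x hx.le
    rw [Real.norm_eq_abs, abs_mul, abs_of_nonneg hux, ← mul_assoc]
    exact mul_le_mul_of_nonneg_right (hD.abs_sub_le hx.le hc) hux
  have hCS : (∫ x in Ioi 0, |x - c| * u t x) ^ 2
      ≤ sizeMoment 0 u t * ∫ x in Ioi 0, (x - c) ^ 2 * u t x := by
    have := sq_integral_mul_le_integral_mul_integral_sq_mul (f := fun x => |x - c|)
      ((ae_restrict_mem measurableSet_Ioi).mono fun x (hx : 0 < x) => hsol.u_nonneg t ht x hx.le)
      hu (hsol.integrableOn_abs_sub_mul ht c)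
      (by simp_rw [sq_abs]; exact hsol.integrableOn_sub_sq_mul ht c)
    simpa [sizeMoment] using this
  calc ((∫ x in Ioi 0, d x * u t x) - d c * sizeMoment 0 u t) ^ 2
      = |∫ x in Ioi 0, (d x - d c) * u t x| ^ 2 := by rw [hdiff, sq_abs]
    _ ≤ (β * ∫ x in Ioi 0, |x - c| * u t x) ^ 2 := pow_le_pow_left₀ (abs_nonneg _) hL1 2
    _ ≤ β ^ 2 * (sizeMoment 0 u t * ∫ x in Ioi 0, (x - c) ^ 2 * u t x) := by
      rw [mul_pow]; exact mul_le_mul_of_nonneg_left hCS (sq_nonneg β)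
    _ = _ := by ring

theorem tendsto_meanSize (hD : DPlus d d' α β) (hsol : WeakSolLSN d M 0 i0 V u)
    (hρ : 0 < sizeMoment 0 u 0) {xb : ℝ} (hxb0 : 0 ≤ xb)
    (hxb : M = sizeMoment 0 u 0 * xb + d xb) : Tendsto (meanSize u) atTop (𝓝 xb) := by
  set e : ℝ → ℝ := fun t => d (meanSize u t) - (∫ x in Ioi 0, d x * u t x) / sizeMoment 0 u 0
  have he_sq : ∀ t ≥ 0, e t ^ 2 ≤ β ^ 2 * centralSizeMoment u t / sizeMoment 0 u 0 := by
    intro t ht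
    have h := hsol.sq_integral_d_mul_sub_le hD ht (hsol.meanSize_nonneg ht)
    rw [hsol.sizeMoment_zero_eq ht] at h
    have he_eq : e t = -((∫ x in Ioi 0, d x * u t x) - d (meanSize u t) * sizeMoment 0 u 0)
        / sizeMoment 0 u 0 := by
      simp only [e]
      field_simp
      ring
    rw [he_eq, div_pow, neg_sq, div_le_div_iff₀ (by positivity) hρ]
    calc _ ≤ β ^ 2 * sizeMoment 0 u 0 * centralSizeMoment u t * sizeMoment 0 u 0 :=
          mul_le_mul_of_nonneg_right h hρ.le
      _ = _ := by ring
  have he : Tendsto e atTop (𝓝 0) := by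
    have hbound := (((hsol.tendsto_centralSizeMoment hD hρ).const_mul (β ^ 2)).div_const
      (sizeMoment 0 u 0)).sqrt
    simp only [mul_zero, zero_div, Real.sqrt_zero] at hbound
    refine squeeze_zero_norm' ?_ hbound
    filter_upwards [eventually_ge_atTop 0] with t ht
    rw [Real.norm_eq_abs, ← Real.sqrt_sq_eq_abs]
    exact Real.sqrt_le_sqrt (he_sq t ht)
  refine tendsto_of_hasDerivWithinAt_of_dissipative hρ
    (fun t ht => hsol.hasDerivWithinAt_meanSize hD hρ ht) (fun t ht => ?_) he
  have hmono := hD.mul_sq_le_mul_sub (hsol.meanSize_nonneg ht) hxb0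
  have hα := hD.alpha_pos
  simp only [e]
  rw [hsol.V_eq_sub_mul_meanSize hρ ht, hxb]
  nlinarith [sq_nonneg (meanSize u t - xb)]

theorem tendsto_V (hD : DPlus d d' α β) (hsol : WeakSolLSN d M 0 i0 V u)
    (hρ : 0 < sizeMoment 0 u 0) {xb : ℝ} (hxb0 : 0 ≤ xb)
    (hxb : M = sizeMoment 0 u 0 * xb + d xb) : Tendsto V atTop (𝓝 (d xb)) := by
  have hlim := tendsto_const_nhds (x := M) |>.sub
    ((hsol.tendsto_meanSize hD hρ hxb0 hxb).const_mul (sizeMoment 0 u 0))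
  rw [show M - sizeMoment 0 u 0 * xb = d xb by linarith] at hlim
  refine hlim.congr' ?_
  filter_upwards [eventually_ge_atTop 0] with t ht
  exact (hsol.V_eq_sub_mul_meanSize hρ ht).symm

end WeakSolLSN

theorem LS_convergence_to_critical_size_general
    (d d' : ℝ → ℝ) (α β : ℝ) (hD : DPlus d d' α β)
    (M : ℝ) (i0 : ℕ)
    (V : ℝ → ℝ) (u : ℝ → ℝ → ℝ)
    (hsol : WeakSolLSN d M 0 i0 V u)
    (hρ0 : 0 < ∫ x in Ioi (0:ℝ), u 0 x)
    (xb : ℝ) (hxb_pos : 0 < xb)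
    (hxb : M = (∫ x in Ioi (0:ℝ), u 0 x) * xb + d xb) :
    Tendsto V atTop (nhds (d xb)) ∧
    ∀ z ∈ Ici (0:ℝ), ∀ X : ℝ → ℝ, X 0 = z →
      (∀ t ∈ Ici (0:ℝ), 0 ≤ X t) →
      (∀ t ∈ Ici (0:ℝ), HasDerivWithinAt X (V t - d (X t)) (Ici 0) t) →
      Tendsto X atTop (nhds xb) := by
  have hρ₀ : sizeMoment 0 u 0 = ∫ x in Ioi (0:ℝ), u 0 x := by simp [sizeMoment]
  have hV := hsol.tendsto_V hD (hρ₀ ▸ hρ0) hxb_pos.le (hρ₀ ▸ hxb)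
  exact ⟨hV, fun _ _ X _ hX_nonneg hX => hD.tendsto_of_hasDerivWithinAt hxb_pos.le hV hX_nonneg hX⟩

/-- Theorem 1.2, item 2: under (D+), for a weak solution of the
Lifshitz–Slyozov system (ε = 0) with total mass `M`, `V₀ > d(0)` and `ρ₀ > 0`,
writing `x̄ > 0` for the unique solution of `M = ρ₀ x̄ + d(x̄)`, one has
`V(t) → d(x̄)` and `X(t,z) → x̄` for every characteristic through `z ≥ 0`. -/
theorem LS_convergence_to_critical_size
    (d d' : ℝ → ℝ) (α β : ℝ) (hD : DPlus d d' α β)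
    (M : ℝ) (hM : 0 < M) (i0 : ℕ)
    (V : ℝ → ℝ) (u : ℝ → ℝ → ℝ)
    (hsol : WeakSolLSN d M 0 i0 V u)
    (hV0 : d 0 < V 0)
    (hρ0 : 0 < ∫ x in Ioi (0:ℝ), u 0 x)
    (xb : ℝ) (hxb_pos : 0 < xb)
    (hxb : M = (∫ x in Ioi (0:ℝ), u 0 x) * xb + d xb) :
    Tendsto V atTop (nhds (d xb)) ∧
    ∀ z ∈ Ici (0:ℝ), ∀ X : ℝ → ℝ, X 0 = z →
      (∀ t ∈ Ici (0:ℝ), 0 ≤ X t) →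
      (∀ t ∈ Ici (0:ℝ), HasDerivWithinAt X (V t - d (X t)) (Ici 0) t) →
      Tendsto X atTop (nhds xb) :=
  LS_convergence_to_critical_size_general d d' α β hD M i0 V u hsol hρ0 xb hxb_pos hxb
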